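/- arXiv:1510.01868 — 2 statements merged into one kernel-verified Lean document; each statement's English description precedes it below -/
import Mathlib

section
/- Let U be a finite semigroup, S a subsemigroup, and x ∈ S regular in S (there is x' ∈ S with x x' x = x). Then the three groups H_x^S (under s*t = sx't), S_{L_x^U} (the quotient of Stab_S(L_x^U) by the kernel of its action on L_x^U) and the corresponding left stabiliser group of R_x^U are pairwise isomorphic. -/
variable {U : Type*}

/-- Green's R-relation relative to a set `T` of multipliers (`T = S` gives `R^S`,
`T = Set.univ` gives `R^U`): `x R y` iff `x ∈ y T^1` and `y ∈ x T^1`. -/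
def GreenR [Mul U] (T : Set U) (x y : U) : Prop :=
  (x = y ∨ ∃ a ∈ T, x * a = y) ∧ (y = x ∨ ∃ a ∈ T, y * a = x)

/-- Green's L-relation relative to a set `T` of multipliers. -/
def GreenL [Mul U] (T : Set U) (x y : U) : Prop :=
  (x = y ∨ ∃ a ∈ T, a * x = y) ∧ (y = x ∨ ∃ a ∈ T, a * y = x)

/-- Green's H-relation relative to `T`. -/
def GreenH [Mul U] (T : Set U) (x y : U) : Prop :=
  GreenL T x y ∧ GreenR T x y

/-- Green's D-relation relative to `T` (for finite semigroups, `D = R ∘ L`). -/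
def GreenD [Mul U] (T : Set U) (x y : U) : Prop :=
  ∃ z, GreenR T x z ∧ GreenL T z y

/-- The `L^U`-class of `x` in the ambient semigroup `U`. -/
def Lcl [Mul U] (x : U) : Set U := {y | GreenL Set.univ x y}

/-- The `R^U`-class of `x` in the ambient semigroup `U`. -/
def RclU [Mul U] (x : U) : Set U := {y | GreenR Set.univ x y}

/-- The `R`-class of `x` relative to multipliers from `T`. -/
def Rcl [Mul U] (T : Set U) (x : U) : Set U := {y | GreenR T x y}

/-- `L_a^U` reaches `L_b^U` under the right action of `T^1` on `L^U`-classes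
given by `L_a · s = L_{a s}`. -/
def reachC [Mul U] (T : Set U) (a b : U) : Prop :=
  Lcl a = Lcl b ∨ ∃ s ∈ T, Lcl (a * s) = Lcl b

/-- `R_a^U` reaches `R_b^U` under the left action of `T^1` on `R^U`-classes. -/
def reachCL [Mul U] (T : Set U) (a b : U) : Prop :=
  RclU a = RclU b ∨ ∃ s ∈ T, RclU (s * a) = RclU b

/-- The right action of `S^1` (identity adjoined, encoded as `Option ↥S`) on `U`. -/
def act1 [Mul U] (S : Subsemigroup U) (u : U) (o : Option ↥S) : U :=
  o.elim u (fun s => u * (s : U))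

/-- The left action of `S^1` on `U`. -/
def act1L [Mul U] (S : Subsemigroup U) (o : Option ↥S) (u : U) : U :=
  o.elim u (fun s => (s : U) * u)

/-- The stabiliser `Stab_S(L_x^U)` of the `L^U`-class of `x` under the right
action of `S^1` on subsets of `U`. -/
def StabOfL [Mul U] (S : Subsemigroup U) (x : U) : Set (Option ↥S) :=
  {o | (fun y => act1 S y o) '' Lcl x = Lcl x}

/-- The stabiliser `Stab_S(R_x^U)` of the `R^U`-class of `x` under the left
action of `S^1` on subsets of `U`. -/
def StabOfR [Mul U] (S : Subsemigroup U) (x : U) : Set (Option ↥S) :=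
  {o | (fun y => act1L S o y) '' RclU x = RclU x}

/-! A regular element `x` with `x x' x = x` gives left and right identities: `x x'` on
`x U¹` and `x' x` on `U¹ x`. With these, `H_x^S` is a finite cancellative monoid under
`s * t = s x' t`, hence a group. An element `s` of `Stab_S(L_x^U)` acts on `L_x^U` as a
permutation `y ↦ y s`, so `x s^n = x` for some `n > 0`, which places `x s` in `H_x^S`;
conversely `x a ∈ H_x^S` makes `y ↦ y a` injective on `L_x^U`, hence a permutation. Since
`y s = (y x') (x s)` for `y ∈ L_x^U`, the action of `s` is determined by `x s`, and composing
two actions corresponds to the product of `H_x^S`. The side of `R_x^U` is dual. -/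

open Function Set

/-- `y ∈ T¹ x`. -/
def IsLeftMultiple [Mul U] (T : Set U) (x y : U) : Prop := x = y ∨ ∃ a ∈ T, a * x = y

/-- `y ∈ x T¹`. -/
def IsRightMultiple [Mul U] (T : Set U) (x y : U) : Prop := x = y ∨ ∃ a ∈ T, x * a = y

section Multiples

variable [Semigroup U] {T T' : Set U} {S : Subsemigroup U} {s x x' y z u v : U}

namespace IsLeftMultiple

theorem refl (T : Set U) (x : U) : IsLeftMultiple T x x := Or.inl rfl

theorem mono (h : IsLeftMultiple T x y) (hT : T ⊆ T') : IsLeftMultiple T' x y :=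
  h.imp_right fun ⟨a, ha, e⟩ => ⟨a, hT ha, e⟩

theorem trans (h₁ : IsLeftMultiple S x y) (h₂ : IsLeftMultiple S y z) :
    IsLeftMultiple S x z := by
  rcases h₁ with rfl | ⟨a, ha, rfl⟩
  · exact h₂
  rcases h₂ with rfl | ⟨b, hb, rfl⟩
  · exact Or.inr ⟨a, ha, rfl⟩
  · exact Or.inr ⟨b * a, S.mul_mem hb ha, mul_assoc b a x⟩

theorem mul_right (h : IsLeftMultiple T x y) (w : U) : IsLeftMultiple T (x * w) (y * w) :=
  h.imp (congrArg (· * w)) fun ⟨a, ha, e⟩ => ⟨a, ha, by rw [← mul_assoc, e]⟩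

theorem mem (h : IsLeftMultiple S x y) (hx : x ∈ S) : y ∈ S := by
  rcases h with rfl | ⟨a, ha, rfl⟩
  exacts [hx, S.mul_mem ha hx]

theorem mul_eq_mul (h : IsLeftMultiple T s x) (huv : s * u = s * v) : x * u = x * v := by
  rcases h with rfl | ⟨a, _, rfl⟩
  · exact huv
  · rw [mul_assoc, huv, mul_assoc]

theorem mul_mul_of_regular (hreg : x * x' * x = x) (h : IsLeftMultiple T x y) :
    y * x' * x = y := by
  rcases h with rfl | ⟨a, _, rfl⟩
  · exact hreg
  · rw [mul_assoc a, mul_assoc a, hreg]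

theorem iterate_mul_left (hs : s ∈ S) (y : U) :
    ∀ n : ℕ, IsLeftMultiple S y ((s * ·)^[n] y)
  | 0 => refl _ y
  | n + 1 => by
    rw [iterate_succ_apply']
    exact (iterate_mul_left hs y n).trans (Or.inr ⟨s, hs, rfl⟩)

end IsLeftMultiple

namespace IsRightMultiple

theorem refl (T : Set U) (x : U) : IsRightMultiple T x x := Or.inl rfl

theorem mono (h : IsRightMultiple T x y) (hT : T ⊆ T') : IsRightMultiple T' x y :=
  h.imp_right fun ⟨a, ha, e⟩ => ⟨a, hT ha, e⟩

theorem trans (h₁ : IsRightMultiple S x y) (h₂ : IsRightMultiple S y z) :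
    IsRightMultiple S x z := by
  rcases h₁ with rfl | ⟨a, ha, rfl⟩
  · exact h₂
  rcases h₂ with rfl | ⟨b, hb, rfl⟩
  · exact Or.inr ⟨a, ha, rfl⟩
  · exact Or.inr ⟨a * b, S.mul_mem ha hb, (mul_assoc x a b).symm⟩

theorem mul_left (h : IsRightMultiple T x y) (w : U) : IsRightMultiple T (w * x) (w * y) :=
  h.imp (congrArg (w * ·)) fun ⟨a, ha, e⟩ => ⟨a, ha, by rw [mul_assoc, e]⟩

theorem mem (h : IsRightMultiple S x y) (hx : x ∈ S) : y ∈ S := by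
  rcases h with rfl | ⟨a, ha, rfl⟩
  exacts [hx, S.mul_mem hx ha]

theorem mul_eq_mul (h : IsRightMultiple T s x) (huv : u * s = v * s) : u * x = v * x := by
  rcases h with rfl | ⟨a, _, rfl⟩
  · exact huv
  · rw [← mul_assoc, huv, mul_assoc]

theorem mul_mul_of_regular (hreg : x * x' * x = x) (h : IsRightMultiple T x y) :
    x * x' * y = y := by
  rcases h with rfl | ⟨a, _, rfl⟩
  · exact hreg
  · rw [← mul_assoc, hreg]

theorem iterate_mul_right (hs : s ∈ S) (y : U) :
    ∀ n : ℕ, IsRightMultiple S y ((· * s)^[n] y)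
  | 0 => refl _ y
  | n + 1 => by
    rw [iterate_succ_apply']
    exact (iterate_mul_right hs y n).trans (Or.inr ⟨s, hs, rfl⟩)

end IsRightMultiple

end Multiples

section Green

variable [Semigroup U] {T T' : Set U} {S : Subsemigroup U} {x y z : U}

theorem GreenL.refl (T : Set U) (x : U) : GreenL T x x :=
  ⟨IsLeftMultiple.refl T x, IsLeftMultiple.refl T x⟩

theorem GreenL.mono (h : GreenL T x y) (hT : T ⊆ T') : GreenL T' x y :=
  ⟨IsLeftMultiple.mono h.1 hT, IsLeftMultiple.mono h.2 hT⟩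

theorem GreenL.trans (h₁ : GreenL S x y) (h₂ : GreenL S y z) : GreenL S x z :=
  ⟨IsLeftMultiple.trans h₁.1 h₂.1, IsLeftMultiple.trans h₂.2 h₁.2⟩

theorem GreenL.mul_right (h : GreenL T x y) (w : U) : GreenL T (x * w) (y * w) :=
  ⟨IsLeftMultiple.mul_right h.1 w, IsLeftMultiple.mul_right h.2 w⟩

theorem GreenR.refl (T : Set U) (x : U) : GreenR T x x :=
  ⟨IsRightMultiple.refl T x, IsRightMultiple.refl T x⟩

theorem GreenR.mono (h : GreenR T x y) (hT : T ⊆ T') : GreenR T' x y :=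
  ⟨IsRightMultiple.mono h.1 hT, IsRightMultiple.mono h.2 hT⟩

theorem GreenR.trans (h₁ : GreenR S x y) (h₂ : GreenR S y z) : GreenR S x z :=
  ⟨IsRightMultiple.trans h₁.1 h₂.1, IsRightMultiple.trans h₂.2 h₁.2⟩

theorem GreenR.mul_left (h : GreenR T x y) (w : U) : GreenR T (w * x) (w * y) :=
  ⟨IsRightMultiple.mul_left h.1 w, IsRightMultiple.mul_left h.2 w⟩

theorem GreenH.refl (T : Set U) (x : U) : GreenH T x x := ⟨GreenL.refl T x, GreenR.refl T x⟩

theorem mem_Lcl_self (x : U) : x ∈ Lcl x := GreenL.refl _ x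

theorem mem_RclU_self (x : U) : x ∈ RclU x := GreenR.refl _ x

theorem mem_Lcl_of_greenH (h : GreenH T x y) : y ∈ Lcl x := h.1.mono (subset_univ T)

theorem mem_RclU_of_greenH (h : GreenH T x y) : y ∈ RclU x := h.2.mono (subset_univ T)

theorem mapsTo_mul_right_Lcl {a : U} (ha : x * a ∈ Lcl x) :
    MapsTo (· * a) (Lcl x) (Lcl x) := fun _ hy =>
  GreenL.trans (S := ⊤) ha (GreenL.mul_right hy a)

theorem mapsTo_mul_left_RclU {a : U} (ha : a * x ∈ RclU x) :
    MapsTo (a * ·) (RclU x) (RclU x) := fun _ hy =>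
  GreenR.trans (S := ⊤) ha (GreenR.mul_left hy a)

end Green

theorem Set.MapsTo.mem_periodicPts_of_injOn {α : Type*} {f : α → α} {s : Set α}
    (hs : s.Finite) (hm : MapsTo f s s) (hi : InjOn f s) {x : α} (hx : x ∈ s) :
    x ∈ periodicPts f := by
  have := hs.to_subtype
  obtain ⟨n, hn, hper⟩ := mem_periodicPts.1 ((hm.restrict_inj.2 hi).mem_periodicPts ⟨x, hx⟩)
  refine mk_mem_periodicPts hn ?_
  have := congrArg Subtype.val hper
  rwa [hm.coe_iterate_restrict] at this

section GroupH

variable [Semigroup U] {S : Subsemigroup U} {x x' s t t' : U}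

theorem GreenH.mul_mul (hreg : x * x' * x = x) (hs : GreenH S x s) (ht : GreenH S x t) :
    GreenH S x (s * x' * t) := by
  have hL : GreenL S t (s * x' * t) := by
    have := hs.1.mul_right (x' * t)
    rwa [← mul_assoc, ← mul_assoc, IsRightMultiple.mul_mul_of_regular hreg ht.2.1] at this
  have hR : GreenR S s (s * x' * t) := by
    have := ht.2.mul_left (s * x')
    rwa [IsLeftMultiple.mul_mul_of_regular hreg hs.1.1] at this
  exact ⟨ht.1.trans hL, hs.2.trans hR⟩

theorem GreenH.mul_mul_left_cancel (hreg : x * x' * x = x) (hs : GreenH S x s)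
    (ht : GreenH S x t) (ht' : GreenH S x t') (h : s * x' * t = s * x' * t') : t = t' := by
  have : x * (x' * t) = x * (x' * t') :=
    IsLeftMultiple.mul_eq_mul hs.1.2 (by simpa only [mul_assoc] using h)
  rwa [← mul_assoc, ← mul_assoc, IsRightMultiple.mul_mul_of_regular hreg ht.2.1,
    IsRightMultiple.mul_mul_of_regular hreg ht'.2.1] at this

theorem GreenH.mul_mul_right_cancel (hreg : x * x' * x = x) (hs : GreenH S x s)
    (ht : GreenH S x t) (ht' : GreenH S x t') (h : t * x' * s = t' * x' * s) : t = t' := by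
  have : t * x' * x = t' * x' * x := IsRightMultiple.mul_eq_mul hs.2.2 h
  rwa [IsLeftMultiple.mul_mul_of_regular hreg ht.1.1,
    IsLeftMultiple.mul_mul_of_regular hreg ht'.1.1] at this

theorem GreenH.exists_inverse [Finite U] (hreg : x * x' * x = x) (hs : GreenH S x s) :
    ∃ t, GreenH S x t ∧ s * x' * t = x ∧ t * x' * s = x := by
  have hmaps : MapsTo (s * x' * ·) {z | GreenH S x z} {z | GreenH S x z} := fun _ ht =>
    GreenH.mul_mul hreg hs ht
  have hinj : InjOn (s * x' * ·) {z | GreenH S x z} := fun _ ht _ ht' h =>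
    hs.mul_mul_left_cancel hreg ht ht' h
  obtain ⟨t, ht, hst : s * x' * t = x⟩ :=
    (((toFinite _).injOn_iff_bijOn_of_mapsTo hmaps).1 hinj).surjOn (GreenH.refl (S : Set U) x)
  refine ⟨t, ht, hst, ht.mul_mul_right_cancel hreg (GreenH.mul_mul hreg ht hs)
    (GreenH.refl _ x) ?_⟩
  calc t * x' * s * x' * t = t * x' * (s * x' * t) := by simp only [mul_assoc]
    _ = x * x' * t := by
      rw [hst, IsLeftMultiple.mul_mul_of_regular hreg ht.1.1,
        IsRightMultiple.mul_mul_of_regular hreg ht.2.1]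

end GroupH

section StabL

variable [Semigroup U] {S : Subsemigroup U} {x x' s a g : U} {o : Option S}

theorem act1_mul_left (o : Option S) (a y : U) : act1 S (a * y) o = a * act1 S y o := by
  cases o
  exacts [rfl, mul_assoc _ _ _]

theorem act1_mem_Lcl (ho : o ∈ StabOfL S x) : act1 S x o ∈ Lcl x :=
  ho ▸ mem_image_of_mem _ (mem_Lcl_self x)

theorem act1_eqOn_Lcl_iff (o p : Option S) :
    (∀ y ∈ Lcl x, act1 S y o = act1 S y p) ↔ act1 S x o = act1 S x p := by
  refine ⟨fun h => h x (mem_Lcl_self x), fun h y hy => ?_⟩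
  rcases hy.1 with rfl | ⟨a, _, rfl⟩
  · exact h
  · rw [act1_mul_left, act1_mul_left, h]

theorem act1_act1_of_mem_StabOfL (hreg : x * x' * x = x) (ho : o ∈ StabOfL S x)
    (p : Option S) : act1 S (act1 S x o) p = act1 S x o * x' * act1 S x p := by
  conv_lhs => rw [← IsLeftMultiple.mul_mul_of_regular hreg (act1_mem_Lcl ho).1, act1_mul_left]

theorem greenH_mul_of_image_mul_right_Lcl_eq [Finite U] (hx : x ∈ S) (hx' : x' ∈ S)
    (hreg : x * x' * x = x) (hs : s ∈ S) (h : (· * s) '' Lcl x = Lcl x) :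
    GreenH S x (x * s) := by
  have hmaps : MapsTo (· * s) (Lcl x) (Lcl x) := fun _ hy => h ▸ mem_image_of_mem _ hy
  have hinj : InjOn (· * s) (Lcl x) :=
    (((toFinite _).surjOn_iff_bijOn_of_mapsTo hmaps).1 (by rw [SurjOn, h])).injOn
  obtain ⟨n, hn, hper⟩ :=
    mem_periodicPts.1 (hmaps.mem_periodicPts_of_injOn (toFinite _) hinj (mem_Lcl_self x))
  obtain ⟨m, rfl⟩ := Nat.exists_eq_add_one_of_ne_zero hn.ne'
  -- `y := x s^m` satisfies `y s = x`, and `y s = (y x') (x s)` because `y ∈ L_x^U`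
  set y := (· * s)^[m] x with hy_def
  have hys : y * s = x := (iterate_succ_apply' _ m x).symm.trans hper
  have hy : y * x' * x = y :=
    IsLeftMultiple.mul_mul_of_regular hreg (hmaps.iterate m (mem_Lcl_self x)).1
  have hyS : y ∈ S := (IsRightMultiple.iterate_mul_right hs x m).mem hx
  have hxs : x * s * x' * x = x * s :=
    IsLeftMultiple.mul_mul_of_regular hreg (hmaps (mem_Lcl_self x)).1
  refine ⟨⟨Or.inr ⟨x * s * x', S.mul_mem (S.mul_mem hx hs) hx', hxs⟩,
    Or.inr ⟨y * x', S.mul_mem hyS hx', ?_⟩⟩, Or.inr ⟨s, hs, rfl⟩, ?_⟩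
  · rw [← mul_assoc, hy, hys]
  · have hx_eq : (· * s)^[m] (x * s) = x := (iterate_succ_apply _ m x).symm.trans hper
    have := IsRightMultiple.iterate_mul_right hs (x * s) m
    rwa [hx_eq] at this

theorem greenH_act1_of_mem_StabOfL [Finite U] (hx : x ∈ S) (hx' : x' ∈ S)
    (hreg : x * x' * x = x) (ho : o ∈ StabOfL S x) : GreenH S x (act1 S x o) := by
  rcases o with _ | ⟨s, hs⟩
  · exact GreenH.refl _ x
  · exact greenH_mul_of_image_mul_right_Lcl_eq hx hx' hreg hs ho

theorem image_mul_right_Lcl_eq [Finite U] {T : Set U} (hreg : x * x' * x = x)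
    (h : GreenH T x (x * a)) : (· * a) '' Lcl x = Lcl x := by
  have hmaps := mapsTo_mul_right_Lcl (mem_Lcl_of_greenH h)
  have hinj : InjOn (· * a) (Lcl x) := fun y hy y' hy' e => by
    have reg := fun {z} (hz : z ∈ Lcl x) => IsLeftMultiple.mul_mul_of_regular hreg hz.1
    calc y = y * x' * x := (reg hy).symm
      _ = y' * x' * x := IsRightMultiple.mul_eq_mul h.2.2 <| by
        rw [← mul_assoc, ← mul_assoc, reg hy, reg hy']; exact e
      _ = y' := reg hy'
  exact (((toFinite _).injOn_iff_bijOn_of_mapsTo hmaps).1 hinj).image_eq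

theorem exists_mem_StabOfL_act1_eq [Finite U] (hreg : x * x' * x = x) (hg : GreenH S x g) :
    ∃ o ∈ StabOfL S x, act1 S x o = g := by
  rcases hg.2.1 with rfl | ⟨a, ha, rfl⟩
  · exact ⟨none, image_id' _, rfl⟩
  · exact ⟨some ⟨a, ha⟩, image_mul_right_Lcl_eq hreg hg, rfl⟩

end StabL

section StabR

variable [Semigroup U] {S : Subsemigroup U} {x x' s a g : U} {o p : Option S}

theorem act1L_mul_right (o : Option S) (a y : U) : act1L S o (y * a) = act1L S o y * a := by
  cases o
  exacts [rfl, (mul_assoc _ _ _).symm]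

theorem act1L_mem_RclU (ho : o ∈ StabOfR S x) : act1L S o x ∈ RclU x :=
  ho ▸ mem_image_of_mem _ (mem_RclU_self x)

theorem act1L_eqOn_RclU_iff (o p : Option S) :
    (∀ y ∈ RclU x, act1L S o y = act1L S p y) ↔ act1L S o x = act1L S p x := by
  refine ⟨fun h => h x (mem_RclU_self x), fun h y hy => ?_⟩
  rcases hy.1 with rfl | ⟨a, _, rfl⟩
  · exact h
  · rw [act1L_mul_right, act1L_mul_right, h]

theorem act1L_act1L_of_mem_StabOfR (hreg : x * x' * x = x) (o : Option S)
    (hp : p ∈ StabOfR S x) : act1L S o (act1L S p x) = act1L S o x * x' * act1L S p x := by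
  conv_lhs => rw [← IsRightMultiple.mul_mul_of_regular hreg (act1L_mem_RclU hp).1, mul_assoc,
    act1L_mul_right, ← mul_assoc]

theorem greenH_mul_of_image_mul_left_RclU_eq [Finite U] (hx : x ∈ S) (hx' : x' ∈ S)
    (hreg : x * x' * x = x) (hs : s ∈ S) (h : (s * ·) '' RclU x = RclU x) :
    GreenH S x (s * x) := by
  have hmaps : MapsTo (s * ·) (RclU x) (RclU x) := fun _ hy => h ▸ mem_image_of_mem _ hy
  have hinj : InjOn (s * ·) (RclU x) :=
    (((toFinite _).surjOn_iff_bijOn_of_mapsTo hmaps).1 (by rw [SurjOn, h])).injOn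
  obtain ⟨n, hn, hper⟩ :=
    mem_periodicPts.1 (hmaps.mem_periodicPts_of_injOn (toFinite _) hinj (mem_RclU_self x))
  obtain ⟨m, rfl⟩ := Nat.exists_eq_add_one_of_ne_zero hn.ne'
  set y := (s * ·)^[m] x with hy_def
  have hsy : s * y = x := (iterate_succ_apply' _ m x).symm.trans hper
  have hy : x * x' * y = y :=
    IsRightMultiple.mul_mul_of_regular hreg (hmaps.iterate m (mem_RclU_self x)).1
  have hyS : y ∈ S := (IsLeftMultiple.iterate_mul_left hs x m).mem hx
  have hsx : x * x' * (s * x) = s * x :=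
    IsRightMultiple.mul_mul_of_regular hreg (hmaps (mem_RclU_self x)).1
  refine ⟨⟨Or.inr ⟨s, hs, rfl⟩, ?_⟩,
    Or.inr ⟨x' * (s * x), S.mul_mem hx' (S.mul_mem hs hx), by rw [← mul_assoc, hsx]⟩,
    Or.inr ⟨x' * y, S.mul_mem hx' hyS, ?_⟩⟩
  · have hx_eq : (s * ·)^[m] (s * x) = x := (iterate_succ_apply _ m x).symm.trans hper
    have := IsLeftMultiple.iterate_mul_left hs (s * x) m
    rwa [hx_eq] at this
  · rw [mul_assoc, ← mul_assoc x, hy, hsy]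

theorem greenH_act1L_of_mem_StabOfR [Finite U] (hx : x ∈ S) (hx' : x' ∈ S)
    (hreg : x * x' * x = x) (ho : o ∈ StabOfR S x) : GreenH S x (act1L S o x) := by
  rcases o with _ | ⟨s, hs⟩
  · exact GreenH.refl _ x
  · exact greenH_mul_of_image_mul_left_RclU_eq hx hx' hreg hs ho

theorem image_mul_left_RclU_eq [Finite U] {T : Set U} (hreg : x * x' * x = x)
    (h : GreenH T x (a * x)) : (a * ·) '' RclU x = RclU x := by
  have hmaps := mapsTo_mul_left_RclU (mem_RclU_of_greenH h)
  have hinj : InjOn (a * ·) (RclU x) := fun y hy y' hy' e => by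
    have reg := fun {z} (hz : z ∈ RclU x) => IsRightMultiple.mul_mul_of_regular hreg hz.1
    calc y = x * x' * y := (reg hy).symm
      _ = x * x' * y' := by
        simp only [mul_assoc x x']
        refine IsLeftMultiple.mul_eq_mul h.1.2 ?_
        rw [mul_assoc, mul_assoc, ← mul_assoc x, ← mul_assoc x, reg hy, reg hy']; exact e
      _ = y' := reg hy'
  exact (((toFinite _).injOn_iff_bijOn_of_mapsTo hmaps).1 hinj).image_eq

theorem exists_mem_StabOfR_act1L_eq [Finite U] (hreg : x * x' * x = x) (hg : GreenH S x g) :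
    ∃ o ∈ StabOfR S x, act1L S o x = g := by
  rcases hg.1.1 with rfl | ⟨a, ha, rfl⟩
  · exact ⟨none, image_id' _, rfl⟩
  · exact ⟨some ⟨a, ha⟩, image_mul_left_RclU_eq hreg hg, rfl⟩

end StabR

/-- If `x ∈ S` is regular in `S` (there is `x' ∈ S` with `x x' x = x`), then the
three groups `H_x^S` (under `s * t = s x' t`), `S_{L_x^U}` (the quotient of
`Stab_S(L_x^U)` by the kernel of its right action on `L_x^U`) and the left
stabiliser group of `R_x^U` are pairwise isomorphic.  Here this is expressed by
saying that `H_x^S` is a group under `s * t = s x' t` with identity `x` and that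
the maps `s ↦ x s` and `t ↦ t x` induce isomorphisms from the two stabiliser
quotients onto `H_x^S`. -/
theorem three_groups_isomorphic [Semigroup U] [Finite U]
    (S : Subsemigroup U) (x x' : U) (hx : x ∈ S) (hx' : x' ∈ S)
    (hreg : x * x' * x = x) :
    -- `H_x^S` is a group under `s * t = s x' t` with identity `x`
    (x ∈ {z | GreenH (S : Set U) x z} ∧
     (∀ s ∈ {z | GreenH (S : Set U) x z}, ∀ t ∈ {z | GreenH (S : Set U) x z},
        s * x' * t ∈ {z | GreenH (S : Set U) x z}) ∧
     (∀ s ∈ {z | GreenH (S : Set U) x z}, x * x' * s = s ∧ s * x' * x = s) ∧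
     (∀ s ∈ {z | GreenH (S : Set U) x z}, ∃ t ∈ {z | GreenH (S : Set U) x z},
        s * x' * t = x ∧ t * x' * s = x)) ∧
    -- `s ↦ x s` induces an isomorphism from `S_{L_x^U}` onto `H_x^S`
    ((∀ o ∈ StabOfL S x, act1 S x o ∈ {z | GreenH (S : Set U) x z}) ∧
     (∀ o ∈ StabOfL S x, ∀ p ∈ StabOfL S x,
        ((∀ y ∈ Lcl x, act1 S y o = act1 S y p) ↔ act1 S x o = act1 S x p)) ∧
     (∀ g ∈ {z | GreenH (S : Set U) x z}, ∃ o ∈ StabOfL S x, act1 S x o = g) ∧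
     (∀ o ∈ StabOfL S x, ∀ p ∈ StabOfL S x,
        act1 S (act1 S x o) p = act1 S x o * x' * act1 S x p)) ∧
    -- `t ↦ t x` induces an isomorphism from the left stabiliser group of `R_x^U`
    -- onto `H_x^S`
    ((∀ o ∈ StabOfR S x, act1L S o x ∈ {z | GreenH (S : Set U) x z}) ∧
     (∀ o ∈ StabOfR S x, ∀ p ∈ StabOfR S x,
        ((∀ y ∈ RclU x, act1L S o y = act1L S p y) ↔ act1L S o x = act1L S p x)) ∧
     (∀ g ∈ {z | GreenH (S : Set U) x z}, ∃ o ∈ StabOfR S x, act1L S o x = g) ∧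
     (∀ o ∈ StabOfR S x, ∀ p ∈ StabOfR S x,
        act1L S o (act1L S p x) = act1L S o x * x' * act1L S p x)) := by
  refine ⟨⟨GreenH.refl _ x, fun s hs t ht => GreenH.mul_mul hreg hs ht,
      fun s hs => ⟨IsRightMultiple.mul_mul_of_regular hreg hs.2.1,
        IsLeftMultiple.mul_mul_of_regular hreg hs.1.1⟩,
      fun s hs => GreenH.exists_inverse hreg hs⟩,
    ⟨fun o ho => greenH_act1_of_mem_StabOfL hx hx' hreg ho,
      fun o _ p _ => act1_eqOn_Lcl_iff o p,
      fun g hg => exists_mem_StabOfL_act1_eq hreg hg,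
      fun o ho p _ => act1_act1_of_mem_StabOfL hreg ho p⟩,
    ⟨fun o ho => greenH_act1L_of_mem_StabOfR hx hx' hreg ho,
      fun o _ p _ => act1L_eqOn_RclU_iff o p,
      fun g hg => exists_mem_StabOfR_act1L_eq hreg hg,
      fun o _ p hp => act1L_act1L_of_mem_StabOfR hreg o hp⟩⟩
end

section
/- Let U be a finite semigroup, S a subsemigroup, x ∈ S with x' ∈ U satisfying x x' x = x. Then R_x^S = {x s u : s ∈ Stab_S(L_x^U), u ∈ U_cal}, where U_cal is any subset of S^1 such that {L_{xu}^U : u ∈ U_cal} equals the set of all L^U-classes in the strongly connected component of L_x^U under the right action of S. -/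
variable {U : Type*}

/-!
The engine is finiteness: some power `e = c ^ n` (`n > 0`) of any `c ∈ S^1` is idempotent, so if
`L_{yc} = L_y` then `y = p y e` gives `y e = y`, and `e` fixes all of `L_y` pointwise.

If `w = x a` and `x = w b`, pick `u ∈ Ucal` with `L_{xu} = L_w`. Then `bu` stabilises `L_w`
and `ub` stabilises `L_x`, and `w = w (bu)^n = x (ub)^(n-1) u`. Conversely, for `w = x s u`
there is `v` with `L_{xuv} = L_x`, so `suv` stabilises `L_x` and `x = x (suv)^n = w v (suv)^(n-1)`.
-/

theorem exists_isIdempotentElem_pow {M : Type*} [Monoid M] [Finite M] (c : M) :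
    ∃ n, 0 < n ∧ IsIdempotentElem (c ^ n) := by
  -- a finite discrete semigroup is compact Hausdorff
  let _ : TopologicalSpace M := ⊥
  have : DiscreteTopology M := ⟨rfl⟩
  obtain ⟨_, ⟨n, hn, rfl⟩, hidem⟩ := exists_idempotent_in_compact_subsemigroup
    (fun _ => continuous_of_discreteTopology) {m | ∃ n, 0 < n ∧ c ^ n = m}
    ⟨c, 1, one_pos, pow_one c⟩ (Set.toFinite _).isCompact
    (by rintro _ ⟨i, hi, rfl⟩ _ ⟨j, -, rfl⟩; exact ⟨i + j, by omega, pow_add c i j⟩)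
  exact ⟨n, hn, hidem⟩

section GreenL

theorem greenL_refl [Mul U] (T : Set U) (a : U) : GreenL T a a :=
  ⟨Or.inl rfl, Or.inl rfl⟩

theorem GreenL.symm [Mul U] {T : Set U} {a b : U} (h : GreenL T a b) : GreenL T b a :=
  ⟨h.2, h.1⟩

variable [Semigroup U]

theorem GreenL.trans_s13 {a b c : U} (hab : GreenL Set.univ a b) (hbc : GreenL Set.univ b c) :
    GreenL Set.univ a c := by
  have step : ∀ {a b c : U}, (a = b ∨ ∃ p ∈ Set.univ, p * a = b) →
      (b = c ∨ ∃ q ∈ Set.univ, q * b = c) → (a = c ∨ ∃ r ∈ Set.univ, r * a = c) := by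
    rintro a b c (rfl | ⟨p, -, rfl⟩) (rfl | ⟨q, -, rfl⟩)
    exacts [Or.inl rfl, Or.inr ⟨q, trivial, rfl⟩, Or.inr ⟨p, trivial, rfl⟩,
      Or.inr ⟨q * p, trivial, mul_assoc q p a⟩]
  exact ⟨step hab.1 hbc.1, step hbc.2 hab.2⟩

theorem lcl_eq_iff {a b : U} : Lcl a = Lcl b ↔ GreenL Set.univ a b where
  mp h := (h ▸ greenL_refl Set.univ b : b ∈ Lcl a)
  mpr h := Set.ext fun _ => ⟨h.symm.trans_s13, h.trans_s13⟩

theorem GreenL.mul_right_s13 {a b : U} (h : GreenL Set.univ a b) (c : U) :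
    GreenL Set.univ (a * c) (b * c) := by
  obtain ⟨hab, hba⟩ := h
  constructor
  · rcases hab with rfl | ⟨p, -, rfl⟩
    exacts [Or.inl rfl, Or.inr ⟨p, trivial, (mul_assoc p a c).symm⟩]
  · rcases hba with rfl | ⟨q, -, rfl⟩
    exacts [Or.inl rfl, Or.inr ⟨q, trivial, (mul_assoc q b c).symm⟩]

end GreenL

section Act

section Mul
variable [Mul U] (S : Subsemigroup U)

@[simp]
theorem act1_one (u : U) : act1 S u (1 : WithOne S) = u := rfl

@[simp]
theorem act1_coe (u : U) (s : S) : act1 S u (s : WithOne S) = u * s := rfl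

theorem eq_or_exists_mul_eq_iff {a b : U} :
    (a = b ∨ ∃ c ∈ (S : Set U), a * c = b) ↔ ∃ o : WithOne S, act1 S a o = b := by
  constructor
  · rintro (rfl | ⟨c, hc, rfl⟩)
    exacts [⟨1, rfl⟩, ⟨((⟨c, hc⟩ : S) : WithOne S), rfl⟩]
  · rintro ⟨o, rfl⟩
    cases o with
    | one => exact Or.inl rfl
    | coe s => exact Or.inr ⟨s, s.2, rfl⟩

theorem mem_rcl_iff {x w : U} : w ∈ Rcl (S : Set U) x ↔
    (∃ a : WithOne S, act1 S x a = w) ∧ ∃ b : WithOne S, act1 S w b = x :=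
  and_congr (eq_or_exists_mul_eq_iff S) (eq_or_exists_mul_eq_iff S)

theorem reachC_iff {a b : U} :
    reachC (S : Set U) a b ↔ ∃ o : WithOne S, Lcl (act1 S a o) = Lcl b := by
  constructor
  · rintro (h | ⟨s, hs, h⟩)
    exacts [⟨1, h⟩, ⟨((⟨s, hs⟩ : S) : WithOne S), h⟩]
  · rintro ⟨o, h⟩
    cases o with
    | one => exact Or.inl h
    | coe s => exact Or.inr ⟨s, s.2, h⟩

end Mul

variable [Semigroup U] (S : Subsemigroup U)

theorem act1_mul (u : U) (o p : WithOne S) : act1 S u (o * p) = act1 S (act1 S u o) p := by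
  cases o <;> cases p <;> simp [← WithOne.coe_mul, mul_assoc]

theorem mul_act1 (p u : U) (o : WithOne S) : act1 S (p * u) o = p * act1 S u o := by
  cases o <;> simp [mul_assoc]

theorem lcl_act1_congr {a b : U} (h : Lcl a = Lcl b) (o : WithOne S) :
    Lcl (act1 S a o) = Lcl (act1 S b o) := by
  cases o with
  | one => exact h
  | coe s => exact lcl_eq_iff.mpr ((lcl_eq_iff.mp h).mul_right_s13 s)

theorem lcl_act1_pow {y : U} {c : WithOne S} (h : Lcl (act1 S y c) = Lcl y) (k : ℕ) :
    Lcl (act1 S y (c ^ k : WithOne S)) = Lcl y := by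
  induction k with
  | zero => rfl
  | succ k ih => rw [pow_succ, act1_mul, lcl_act1_congr S ih, h]

theorem exists_act1_pow_eq_of_lcl_act1_eq [Finite U] {y : U} {c : WithOne S}
    (h : Lcl (act1 S y c) = Lcl y) :
    ∃ n, 0 < n ∧ ∀ z ∈ Lcl y, act1 S z (c ^ n : WithOne S) = z := by
  have : Finite (WithOne S) := inferInstanceAs (Finite (Option S))
  obtain ⟨n, hn, hidem⟩ := exists_isIdempotentElem_pow c
  have hy : act1 S y (c ^ n : WithOne S) = y := by
    rcases (lcl_eq_iff.mp (lcl_act1_pow S h n)).1 with hy | ⟨p, -, hp⟩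
    · exact hy
    · nth_rw 1 [← hp]
      rw [mul_act1, ← act1_mul, hidem.eq, hp]
  refine ⟨n, hn, fun z hz => ?_⟩
  rcases hz.1 with rfl | ⟨q, -, rfl⟩
  exacts [hy, by rw [mul_act1, hy]]

theorem mem_stabOfL_iff [Finite U] {x : U} {o : WithOne S} :
    o ∈ StabOfL S x ↔ Lcl (act1 S x o) = Lcl x := by
  constructor
  · intro h
    have hx : act1 S x o ∈ Lcl x := h ▸ ⟨x, greenL_refl _ x, rfl⟩
    exact (lcl_eq_iff.mpr hx).symm
  · intro h
    obtain ⟨n, hn, hfix⟩ := exists_act1_pow_eq_of_lcl_act1_eq S h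
    apply Set.Subset.antisymm
    · rintro _ ⟨z, hz, rfl⟩
      exact lcl_eq_iff.mp (by rw [← lcl_act1_congr S (lcl_eq_iff.mpr hz), h])
    · intro z hz
      refine ⟨act1 S z (o ^ (n - 1) : WithOne S), lcl_eq_iff.mp ?_, ?_⟩
      · rw [← lcl_act1_congr S (lcl_eq_iff.mpr hz), lcl_act1_pow S h]
      · show act1 S (act1 S z (o ^ (n - 1) : WithOne S)) o = z
        rw [← act1_mul, pow_sub_one_mul hn.ne', hfix z hz]

theorem exists_act1_act1_eq_of_lcl_act1_eq [Finite U] {x w : U} {b u : WithOne S}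
    (hb : act1 S w b = x) (hu : Lcl (act1 S x u) = Lcl w) :
    ∃ s : WithOne S, Lcl (act1 S x s) = Lcl x ∧ act1 S (act1 S x s) u = w := by
  have hbu : Lcl (act1 S w (b * u)) = Lcl w := by rw [act1_mul, hb, hu]
  have hub : Lcl (act1 S x (u * b)) = Lcl x := by rw [act1_mul, lcl_act1_congr S hu, hb]
  obtain ⟨n, hn, hfix⟩ := exists_act1_pow_eq_of_lcl_act1_eq S hbu
  refine ⟨(u * b) ^ (n - 1), lcl_act1_pow S hub _, ?_⟩
  calc act1 S (act1 S x ((u * b) ^ (n - 1) : WithOne S)) u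
      = act1 S w (b * (u * b) ^ (n - 1) * u) := by rw [← hb, act1_mul, act1_mul]
    _ = act1 S w ((b * u) ^ n : WithOne S) := by
      rw [← mul_pow_mul, mul_assoc, ← pow_succ, Nat.sub_add_cancel hn]
    _ = w := hfix w (greenL_refl _ w)

theorem exists_act1_eq_of_lcl_act1_act1_eq [Finite U] {x : U} {s u v : WithOne S}
    (hs : Lcl (act1 S x s) = Lcl x) (hv : Lcl (act1 S (act1 S x u) v) = Lcl x) :
    ∃ c : WithOne S, act1 S (act1 S (act1 S x s) u) c = x := by
  have hsuv : Lcl (act1 S x (s * u * v)) = Lcl x := by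
    rw [act1_mul, act1_mul, lcl_act1_congr S (lcl_act1_congr S hs u) v, hv]
  obtain ⟨n, hn, hfix⟩ := exists_act1_pow_eq_of_lcl_act1_eq S hsuv
  refine ⟨v * (s * u * v) ^ (n - 1), ?_⟩
  rw [← act1_mul, ← act1_mul, ← mul_assoc, ← mul_assoc, mul_pow_sub_one hn.ne']
  exact hfix x (greenL_refl _ x)

end Act

theorem rclass_eq_orbit_form_general [Semigroup U] [Finite U] (S : Subsemigroup U)
    (x : U)
    (Ucal : Set (Option ↥S))
    (hU : {B : Set U | ∃ u ∈ Ucal, B = Lcl (act1 S x u)} =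
      {B : Set U | ∃ z : U, B = Lcl z ∧ reachC (S : Set U) x z ∧ reachC (S : Set U) z x}) :
    Rcl (S : Set U) x =
      {w | ∃ s ∈ StabOfL S x, ∃ u ∈ Ucal, w = act1 S (act1 S x s) u} := by
  ext w
  constructor
  · intro hw
    obtain ⟨⟨a, rfl⟩, b, hb⟩ := (mem_rcl_iff S).mp hw
    obtain ⟨u, hu, hxu⟩ :
        Lcl (act1 S x a) ∈ {B : Set U | ∃ u ∈ Ucal, B = Lcl (act1 S x u)} :=
      hU ▸ ⟨_, rfl, (reachC_iff S).mpr ⟨a, rfl⟩, (reachC_iff S).mpr ⟨b, by rw [hb]⟩⟩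
    obtain ⟨s, hs, hsu⟩ := exists_act1_act1_eq_of_lcl_act1_eq S hb hxu.symm
    exact ⟨s, (mem_stabOfL_iff S).mpr hs, u, hu, hsu.symm⟩
  · rintro ⟨s, hs, u, hu, rfl⟩
    obtain ⟨z, hz, -, hzx⟩ : Lcl (act1 S x u) ∈
        {B : Set U | ∃ z : U, B = Lcl z ∧ reachC (S : Set U) x z ∧ reachC (S : Set U) z x} :=
      hU ▸ ⟨u, hu, rfl⟩
    obtain ⟨v, hv⟩ := (reachC_iff S).mp hzx
    refine (mem_rcl_iff S).mpr ⟨⟨_, act1_mul S x s u⟩, ?_⟩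
    exact exists_act1_eq_of_lcl_act1_act1_eq S ((mem_stabOfL_iff S).mp hs)
      (by rwa [lcl_act1_congr S hz])

/-- If `x ∈ S` and `x' ∈ U` satisfies `x x' x = x`, and `Ucal ⊆ S^1` is any
subset such that `{L_{xu}^U : u ∈ Ucal}` is exactly the set of `L^U`-classes in
the strongly connected component of `L_x^U` under the right action of `S`, then
`R_x^S = {x s u : s ∈ Stab_S(L_x^U), u ∈ Ucal}`. -/
theorem rclass_eq_orbit_form [Semigroup U] [Finite U] (S : Subsemigroup U)
    (x : U) (hx : x ∈ S) (x' : U) (hx' : x * x' * x = x)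
    (Ucal : Set (Option ↥S))
    (hU : {B : Set U | ∃ u ∈ Ucal, B = Lcl (act1 S x u)} =
      {B : Set U | ∃ z : U, B = Lcl z ∧ reachC (S : Set U) x z ∧ reachC (S : Set U) z x}) :
    Rcl (S : Set U) x =
      {w | ∃ s ∈ StabOfL S x, ∃ u ∈ Ucal, w = act1 S (act1 S x s) u} :=
  rclass_eq_orbit_form_general S x Ucal hU
end
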